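/- arXiv:1610.05365 — 2 statements merged into one kernel-verified Lean document; each statement's English description precedes it below -/
import Mathlib

section
/- If an almost Abelian Lie algebra L has two distinct codimension 1 Abelian ideals, then L is isomorphic to the direct sum of the Heisenberg Lie algebra H_F and an Abelian Lie algebra. -/
variable {F : Type*} [Field F] {V : Type*} [AddCommGroup V] [Module F V]

/-- The almost Abelian Lie algebra `F e₀ ⋉ V` determined by the operator `T = ad_{e₀}|_V`:
the underlying vector space is `F × V`, with bracket `[(t,v),(s,w)] = (0, t • T w - s • T v)`. -/
def AA (F V : Type*) [Field F] [AddCommGroup V] [Module F V] (_T : Module.End F V) : Type _ :=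
  F × V

namespace AA

variable {T : Module.End F V}

instance : AddCommGroup (AA F V T) := inferInstanceAs (AddCommGroup (F × V))
instance : Module F (AA F V T) := inferInstanceAs (Module F (F × V))

instance : LieRing (AA F V T) where
  bracket := fun (x y : F × V) => (((0 : F), x.1 • T y.2 - y.1 • T x.2) : F × V)
  add_lie := by
    rintro ⟨a, u⟩ ⟨b, v⟩ ⟨c, w⟩
    show (((0 : F), (a + b) • T w - c • T (u + v)) : F × V)
      = (((0 : F), a • T w - c • T u) : F × V) + (((0 : F), b • T w - c • T v) : F × V)
    ext
    · simp
    · show (a + b) • T w - c • T (u + v) = (a • T w - c • T u) + (b • T w - c • T v)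
      simp only [map_add, smul_add, add_smul]
      module
  lie_add := by
    rintro ⟨a, u⟩ ⟨b, v⟩ ⟨c, w⟩
    show (((0 : F), a • T (v + w) - (b + c) • T u) : F × V)
      = (((0 : F), a • T v - b • T u) : F × V) + (((0 : F), a • T w - c • T u) : F × V)
    ext
    · simp
    · show a • T (v + w) - (b + c) • T u = (a • T v - b • T u) + (a • T w - c • T u)
      simp only [map_add, smul_add, add_smul]
      module
  lie_self := by
    rintro ⟨a, u⟩
    show (((0 : F), a • T u - a • T u) : F × V) = (0 : F × V)
    ext
    · simp
    · show a • T u - a • T u = (0 : V)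
      simp
  leibniz_lie := by
    rintro ⟨a, u⟩ ⟨b, v⟩ ⟨c, w⟩
    show (((0 : F), a • T (b • T w - c • T v) - (0 : F) • T u) : F × V)
      = (((0 : F), (0 : F) • T w - c • T (a • T v - b • T u)) : F × V)
        + (((0 : F), b • T (a • T w - c • T u) - (0 : F) • T v) : F × V)
    ext
    · simp
    · show a • T (b • T w - c • T v) - (0 : F) • T u
        = ((0 : F) • T w - c • T (a • T v - b • T u)) + (b • T (a • T w - c • T u) - (0 : F) • T v)
      simp only [map_sub, map_smul, zero_smul, smul_sub, smul_smul]
      module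

instance : LieAlgebra F (AA F V T) where
  lie_smul := by
    rintro r ⟨a, u⟩ ⟨b, v⟩
    show (((0 : F), a • T (r • v) - (r • b) • T u) : F × V)
      = r • (((0 : F), a • T v - b • T u) : F × V)
    ext
    · simp
    · show a • T (r • v) - (r • b) • T u = r • (a • T v - b • T u)
      simp only [map_smul, smul_sub, smul_smul, smul_eq_mul]
      module

/-- The distinguished element `e₀`. -/
def e0 (T : Module.End F V) : AA F V T := ((1, 0) : F × V)

/-- The inclusion of the Abelian ideal `V` into `F e₀ ⋉ V`. -/
def incl (T : Module.End F V) : V →ₗ[F] AA F V T where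
  toFun v := ((0, v) : F × V)
  map_add' u v := by
    show (((0 : F), u + v) : F × V) = (((0 : F), u) : F × V) + (((0 : F), v) : F × V)
    ext <;> simp
  map_smul' r v := by
    show (((0 : F), r • v) : F × V) = r • (((0 : F), v) : F × V)
    ext <;> simp

@[simp] lemma bracket_e0_incl (v : V) : ⁅e0 T, incl T v⁆ = incl T (T v) := by
  show (((0 : F), (1 : F) • T v - (0 : F) • T (0 : V)) : F × V) = (((0 : F), T v) : F × V)
  ext <;> simp

end AA


/-- A Lie algebra is almost Abelian if it is non-Abelian and possesses an Abelian ideal of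
codimension 1 (as an `F`-vector subspace). -/
def IsAlmostAbelian (F L : Type*) [Field F] [LieRing L] [LieAlgebra F L] : Prop :=
  ¬IsLieAbelian L ∧
    ∃ I : LieIdeal F L, IsLieAbelian I ∧ Module.rank F (L ⧸ I.toSubmodule) = 1

/-- The operator defining the Heisenberg algebra: `T (a, b) = (b, 0)`. -/
def heisT (F : Type*) [Field F] : Module.End F (F × F) :=
  (LinearMap.snd F F F).prod 0

/-- The Heisenberg Lie algebra `H_F`, with basis `e₀, e₁ = ((0,(1,0)))`, `e₂ = ((0,(0,1)))` and
relations `[e₀, e₂] = e₁`, `[e₀, e₁] = [e₁, e₂] = 0`. -/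
abbrev Heisenberg (F : Type*) [Field F] : Type _ := AA F (F × F) (heisT F)

universe u v

/-!
Choose `x ∈ V₁ \ V₂` and `y ∈ V₂ \ V₁`. Since both ideals are hyperplanes,
`L = F x ⊕ F y ⊕ (V₁ ∩ V₂)`, and since both are Abelian the only nonzero bracket between these
pieces is `z = ⁅x, y⁆ ∈ V₁ ∩ V₂`, which cannot vanish because `L` is not Abelian. Splitting
`V₁ ∩ V₂ = F z ⊕ W`, the elements `x, z, y` span a Heisenberg algebra and `W` is central.
-/

open LinearMap

namespace Submodule

variable {K M : Type*} [Field K] [AddCommGroup M] [Module K M] {p q : Submodule K M} {x y : M}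

theorem isCoatom_of_rank_quotient_eq_one (h : Module.rank K (M ⧸ p) = 1) : IsCoatom p :=
  isSimpleModule_iff_isCoatom.mp <| isSimpleModule_iff_finrank_eq_one.mpr <|
    Module.finrank_eq_of_rank_eq (by rwa [Nat.cast_one])

theorem exists_mem_notMem_of_isCoatom (hp : IsCoatom p) (hq : IsCoatom q) (hpq : p ≠ q) :
    ∃ x ∈ p, x ∉ q :=
  SetLike.not_le_iff_exists.mp fun hle => (hp.le_iff.mp hle).elim hq.ne_top hpq.symm

theorem exists_mem_add_smul_eq_of_isCoatom (hq : IsCoatom q) (hx : x ∉ q) (v : M) :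
    ∃ w ∈ q, ∃ t : K, w + t • x = v := by
  obtain ⟨w, hw, _, hs, rfl⟩ :=
    mem_sup.mp ((isCompl_span_singleton_of_isCoatom_of_notMem hq hx).sup_eq_top ▸ mem_top (x := v))
  obtain ⟨t, rfl⟩ := mem_span_singleton.mp hs
  exact ⟨w, hw, t, rfl⟩

theorem bijective_coprod_toSpanSingleton_of_isCoatom (hp : IsCoatom p) (hq : IsCoatom q)
    (hxq : x ∉ q) (hyq : y ∈ q) (hyp : y ∉ p) :
    Function.Bijective
      ((toSpanSingleton K M x).coprod ((toSpanSingleton K M y).coprod (p ⊓ q).subtype)) := by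
  constructor
  · rw [← ker_eq_bot, eq_bot_iff]
    rintro ⟨t, b, u, hu⟩ h
    replace h : t • x + (b • y + u) = 0 := h
    obtain rfl : t = 0 := by
      by_contra ht
      refine hxq ((q.smul_mem_iff ht).mp ?_)
      rw [eq_neg_of_add_eq_zero_left h]
      exact q.neg_mem (q.add_mem (q.smul_mem b hyq) (mem_inf.mp hu).2)
    rw [zero_smul, zero_add] at h
    obtain rfl : b = 0 := by
      by_contra hb
      refine hyp ((p.smul_mem_iff hb).mp ?_)
      rw [eq_neg_of_add_eq_zero_left h]
      exact p.neg_mem (mem_inf.mp hu).1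
    rw [zero_smul, zero_add] at h
    subst h
    rfl
  · intro l
    obtain ⟨v, hv, t, rfl⟩ := exists_mem_add_smul_eq_of_isCoatom hq hxq l
    obtain ⟨u, hu, b, rfl⟩ := exists_mem_add_smul_eq_of_isCoatom hp hyp v
    have huq : u ∈ q := by simpa using q.sub_mem hv (q.smul_mem b hyq)
    refine ⟨(t, b, ⟨u, mem_inf.mpr ⟨hu, huq⟩⟩), ?_⟩
    simp only [coprod_apply, toSpanSingleton_apply, subtype_apply]
    abel

end Submodule

section AbelianIdeals

variable {F L : Type*} [Field F] [LieRing L] [LieAlgebra F L]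

theorem LieIdeal.lie_eq_zero_of_isLieAbelian {I : LieIdeal F L} (hI : IsLieAbelian I) {x y : L}
    (hx : x ∈ I) (hy : y ∈ I) : ⁅x, y⁆ = 0 :=
  (LieSubmodule.lie_eq_bot_iff I I).mp ((LieSubmodule.lie_abelian_iff_lie_self_eq_bot I).mp hI)
    x hx y hy

variable {I J : LieIdeal F L} {x y u u' : L}

theorem lie_smul_add_smul_add_eq (hI : IsLieAbelian I) (hJ : IsLieAbelian J) (hx : x ∈ I)
    (hy : y ∈ J) (hu : u ∈ I.toSubmodule ⊓ J.toSubmodule)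
    (hu' : u' ∈ I.toSubmodule ⊓ J.toSubmodule) (t b s d : F) :
    ⁅t • x + (b • y + u), s • x + (d • y + u')⁆ = (t * d - s * b) • ⁅x, y⁆ := by
  obtain ⟨hu₁, hu₂⟩ := hu
  obtain ⟨hu'₁, hu'₂⟩ := hu'
  have hI0 {a b : L} (ha : a ∈ I) (hb : b ∈ I) := LieIdeal.lie_eq_zero_of_isLieAbelian hI ha hb
  have hJ0 {a b : L} (ha : a ∈ J) (hb : b ∈ J) := LieIdeal.lie_eq_zero_of_isLieAbelian hJ ha hb
  simp only [add_lie, lie_add, smul_lie, lie_smul, lie_self, ← lie_skew y x, hI0 hx hu'₁,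
    hI0 hu₁ hx, hI0 hu₁ hu'₁, hJ0 hy hu'₂, hJ0 hu₂ hy, smul_zero]
  module

end AbelianIdeals

namespace AA

variable {F L : Type*} [Field F] [LieRing L] [LieAlgebra F L] {W : Type*} [AddCommGroup W]
  [Module F W]

theorem lie_heisT_prodMap_zero (p q : AA F ((F × F) × W) ((heisT F).prodMap 0)) :
    ⁅p, q⁆ = ((0, (p.1 * q.2.1.2 - q.1 * p.2.1.2, 0), 0) : F × (F × F) × W) := by
  show (((0 : F), p.1 • ((heisT F).prodMap (0 : Module.End F W)) q.2
    - q.1 • ((heisT F).prodMap (0 : Module.End F W)) p.2) : F × ((F × F) × W)) = _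
  simp [heisT]

theorem nonempty_lieEquiv_heisT_prodMap_zero {x y : L} {U : Submodule F L}
    (hbij : Function.Bijective
      ((toSpanSingleton F L x).coprod ((toSpanSingleton F L y).coprod U.subtype)))
    (hlie : ∀ (t b s d : F) (u u' : L), u ∈ U → u' ∈ U →
      ⁅t • x + (b • y + u), s • x + (d • y + u')⁆ = (t * d - s * b) • ⁅x, y⁆)
    (hxyU : ⁅x, y⁆ ∈ U) (hxy : ⁅x, y⁆ ≠ 0) (V : Submodule F U)
    (hV : IsCompl (F ∙ (⟨⁅x, y⁆, hxyU⟩ : U)) V) :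
    Nonempty (AA F ((F × F) × V) ((heisT F).prodMap 0) ≃ₗ⁅F⁆ L) := by
  let shuffle : AA F ((F × F) × V) ((heisT F).prodMap 0) ≃ₗ[F] (F × F × F × V) :=
    (LinearEquiv.refl F F).prodCongr
      (((LinearEquiv.prodComm F F F).prodCongr (LinearEquiv.refl F V)).trans
        (LinearEquiv.prodAssoc F F F V))
  let decompU : (F × V) ≃ₗ[F] U :=
    ((LinearEquiv.toSpanNonzeroSingleton F U _ (by simpa using hxy)).prodCongr
      (LinearEquiv.refl F V)).trans (Submodule.prodEquivOfIsCompl _ _ hV)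
  let e := (shuffle.trans ((LinearEquiv.refl F F).prodCongr
    ((LinearEquiv.refl F F).prodCongr decompU))).trans (LinearEquiv.ofBijective _ hbij)
  have he (p : AA F ((F × F) × V) ((heisT F).prodMap 0)) :
      e p = p.1 • x + (p.2.1.2 • y + (p.2.1.1 • ⁅x, y⁆ + p.2.2)) := rfl
  refine ⟨{ e with map_lie' := fun {p q} => ?_ }⟩
  have hmem (p : AA F ((F × F) × V) ((heisT F).prodMap 0)) : p.2.1.1 • ⁅x, y⁆ + p.2.2 ∈ U :=
    U.add_mem (U.smul_mem _ hxyU) (p.2.2 : U).2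
  change e ⁅p, q⁆ = ⁅e p, e q⁆
  rw [he p, he q, hlie _ _ _ _ _ _ (hmem p) (hmem q), lie_heisT_prodMap_zero]
  exact (he _).trans (by simp)

end AA

/-- If an almost Abelian Lie algebra has two distinct codimension 1 Abelian ideals then it is
isomorphic to the direct sum `H_F ⊕ W` of the Heisenberg algebra with an Abelian Lie algebra,
realized here as `F e₀ ⋉ ((F × F) × W)` with `ad_{e₀} = heisT ⊕ 0`. -/
theorem stmt10 (F : Type u) (L : Type v) [Field F] [LieRing L] [LieAlgebra F L]
    (hL : IsAlmostAbelian F L) (V₁ V₂ : LieIdeal F L) (hne : V₁ ≠ V₂)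
    (h₁ : IsLieAbelian V₁) (hcod₁ : Module.rank F (L ⧸ V₁.toSubmodule) = 1)
    (h₂ : IsLieAbelian V₂) (hcod₂ : Module.rank F (L ⧸ V₂.toSubmodule) = 1) :
    ∃ (W : Type v) (_ : AddCommGroup W) (_ : Module F W),
      Nonempty (L ≃ₗ⁅F⁆ AA F ((F × F) × W) ((heisT F).prodMap (0 : Module.End F W))) := by
  have hc₁ := Submodule.isCoatom_of_rank_quotient_eq_one hcod₁
  have hc₂ := Submodule.isCoatom_of_rank_quotient_eq_one hcod₂
  have hne' : V₁.toSubmodule ≠ V₂.toSubmodule := LieSubmodule.toSubmodule_injective.ne hne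
  obtain ⟨x, hx₁, hx₂⟩ := Submodule.exists_mem_notMem_of_isCoatom hc₁ hc₂ hne'
  obtain ⟨y, hy₂, hy₁⟩ := Submodule.exists_mem_notMem_of_isCoatom hc₂ hc₁ hne'.symm
  set U := V₁.toSubmodule ⊓ V₂.toSubmodule
  have hbij := Submodule.bijective_coprod_toSpanSingleton_of_isCoatom hc₁ hc₂ hx₂ hy₂ hy₁
  have hlie (t b s d : F) (u u' : L) (hu : u ∈ U) (hu' : u' ∈ U) :=
    lie_smul_add_smul_add_eq h₁ h₂ hx₁ hy₂ hu hu' t b s d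
  have hxyU : ⁅x, y⁆ ∈ U := ⟨lie_mem_left F L V₁ x y hx₁, lie_mem_right F L V₂ x y hy₂⟩
  have hxy : ⁅x, y⁆ ≠ 0 := by
    refine fun h => hL.1 ⟨fun a a' => ?_⟩
    obtain ⟨⟨t, b, u, hu⟩, rfl⟩ := hbij.2 a
    obtain ⟨⟨s, d, u', hu'⟩, rfl⟩ := hbij.2 a'
    simpa [h] using hlie t b s d u u' hu hu'
  obtain ⟨W, hW⟩ := Submodule.exists_isCompl (F ∙ (⟨⁅x, y⁆, hxyU⟩ : U))
  obtain ⟨e⟩ := AA.nonempty_lieEquiv_heisT_prodMap_zero hbij hlie hxyU hxy W hW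
  exact ⟨W, _, _, ⟨e.symm⟩⟩
end

section
/- Let L = F e₀ ⋉ V be an indecomposable almost Abelian Lie algebra not isomorphic to the Heisenberg algebra H_F. Then every automorphism φ of L satisfies φ(V) = V, and φ has the form φ(e₀) = α e₀ + γ, φ|_V = Δ, where α ∈ F*, γ ∈ V, Δ ∈ GL(V) and Δ ∘ ad_{e₀} = α · ad_{e₀} ∘ Δ. Conversely every such map is an automorphism. -/
variable {F : Type*} [Field F] {V : Type*} [AddCommGroup V] [Module F V]

/-- A Lie algebra is indecomposable if it is not the direct sum of two nonzero ideals. -/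
def LieIndecomposable (F L : Type*) [Field F] [LieRing L] [LieAlgebra F L] : Prop :=
  ¬∃ (I J : LieIdeal F L), I ≠ ⊥ ∧ J ≠ ⊥ ∧ I ⊓ J = ⊥ ∧ I ⊔ J = ⊤

/-!
If an automorphism `φ` moves some `v ∈ V` out of `V`, then `ad (φ v)` acts on `V` as a nonzero
multiple of `T`, while it is conjugate to `ad v`, whose image is `F • T v`. Hence `T = ℓ ⊗ e` has
rank one, and `ℓ e = 0` because `ℓ` vanishes on `[L, L] = T V`. If `ker ℓ = F e` this makes
`L ≅ H_F`; otherwise a vector of `ker ℓ` outside `F e` is central and not in `[L, L]`, so it spans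
a direct summand of `L`. Once `φ V = V`, the shape of `φ` is read off from
`φ [e₀, v] = [φ e₀, φ v]`.
-/

theorem not_lieIndecomposable_of_central {F L : Type*} [Field F] [LieRing L] [LieAlgebra F L]
    (S : Submodule F L) (hS : ∀ x y : L, ⁅x, y⁆ ∈ S) (hS0 : S ≠ ⊥) {z : L} (hzS : z ∉ S)
    (hz : ∀ x : L, ⁅x, z⁆ = 0) : ¬LieIndecomposable F L := by
  have hz0 : z ≠ 0 := fun h => hzS (h ▸ S.zero_mem)
  obtain ⟨C, hC⟩ := Submodule.exists_isCompl ((F ∙ z) ⊔ S)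
  have hcompl : IsCompl (F ∙ z) (S ⊔ C) :=
    ((Submodule.disjoint_span_singleton' hz0).2 hzS).symm.isCompl_sup_right_of_isCompl_sup_left hC
  let I : LieIdeal F L :=
    { toSubmodule := F ∙ z
      lie_mem := fun {x _} hm => by
        obtain ⟨t, rfl⟩ := Submodule.mem_span_singleton.1 hm
        simp [hz] }
  let J : LieIdeal F L :=
    { toSubmodule := S ⊔ C
      lie_mem := fun {x m} _ => Submodule.mem_sup_left (hS x m) }
  refine fun hind => hind ⟨I, J, ?_, ?_, ?_, ?_⟩
  · rw [ne_eq, ← LieSubmodule.toSubmodule_eq_bot]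
    exact Submodule.span_singleton_eq_bot.not.2 hz0
  · rw [ne_eq, ← LieSubmodule.toSubmodule_eq_bot]
    exact fun h => hS0 (eq_bot_mono le_sup_left h)
  · rw [← LieSubmodule.toSubmodule_eq_bot, LieSubmodule.inf_toSubmodule]
    exact hcompl.inf_eq_bot
  · rw [← LieSubmodule.toSubmodule_eq_top, LieSubmodule.sup_toSubmodule]
    exact hcompl.sup_eq_top

namespace AA

variable {T : Module.End F V} {V' : Type*} [AddCommGroup V'] [Module F V'] {T' : Module.End F V'}

def fst : AA F V T →ₗ[F] F := LinearMap.fst F F V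

def snd : AA F V T →ₗ[F] V := LinearMap.snd F F V

@[simp] lemma fst_incl (v : V) : fst (incl T v) = 0 := rfl
@[simp] lemma snd_incl (v : V) : snd (incl T v) = v := rfl
@[simp] lemma fst_e0 : fst (e0 T) = 1 := rfl
@[simp] lemma snd_e0 : snd (e0 T) = 0 := rfl
@[simp] lemma fst_lie (x y : AA F V T) : fst ⁅x, y⁆ = 0 := rfl
@[simp] lemma snd_lie (x y : AA F V T) :
    snd ⁅x, y⁆ = fst x • T (snd y) - fst y • T (snd x) := rfl

@[ext] lemma ext {x y : AA F V T} (h₁ : fst x = fst y) (h₂ : snd x = snd y) : x = y :=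
  Prod.ext h₁ h₂

lemma incl_injective : Function.Injective (incl T) := fun _ _ h => congrArg snd h

lemma incl_snd_of_fst_eq_zero {x : AA F V T} (h : fst x = 0) : incl T (snd x) = x := by
  ext <;> simp [h]

lemma fst_smul_e0_add_incl_snd (x : AA F V T) : fst x • e0 T + incl T (snd x) = x := by
  ext <;> simp

lemma lie_incl (x : AA F V T) (w : V) : ⁅x, incl T w⁆ = fst x • incl T (T w) := by
  ext <;> simp

lemma incl_lie (v : V) (y : AA F V T) : ⁅incl T v, y⁆ = -(fst y • incl T (T v)) := by
  rw [← lie_skew, lie_incl]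

lemma lie_mem_map_incl_range (x y : AA F V T) :
    ⁅x, y⁆ ∈ (LinearMap.range T).map (incl T) :=
  ⟨snd ⁅x, y⁆, by
    rw [snd_lie]
    exact sub_mem (Submodule.smul_mem _ _ ⟨_, rfl⟩) (Submodule.smul_mem _ _ ⟨_, rfl⟩),
    incl_snd_of_fst_eq_zero (fst_lie x y)⟩

def congr (Θ : V ≃ₗ[F] V') (h : ∀ v, Θ (T v) = T' (Θ v)) :
    AA F V T ≃ₗ⁅F⁆ AA F V' T' :=
  { (LinearEquiv.refl F F).prodCongr Θ with
    map_lie' := fun {x y} => by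
      show ((0 : F), Θ (x.1 • T y.2 - y.1 • T x.2))
        = ((0 : F), x.1 • T' (Θ y.2) - y.1 • T' (Θ x.2))
      simp [h] }

section mkAut

variable {α : F} (hα : α ≠ 0) (γ : V) (Δ : V ≃ₗ[F] V) (hΔ : ∀ v, Δ (T v) = α • T (Δ v))

def mkAut : AA F V T ≃ₗ⁅F⁆ AA F V T where
  toFun x := (α * fst x) • e0 T + incl T (fst x • γ + Δ (snd x))
  invFun y := (α⁻¹ * fst y) • e0 T + incl T (Δ.symm (snd y - (α⁻¹ * fst y) • γ))
  left_inv x := by ext <;> simp [hα]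
  right_inv y := by ext <;> simp [hα]
  map_add' x y := by
    ext <;> simp only [map_add, map_smul, fst_e0, snd_e0, fst_incl, snd_incl] <;> module
  map_smul' t x := by
    ext <;> simp only [map_add, map_smul, fst_e0, snd_e0, fst_incl, snd_incl, smul_eq_mul,
      RingHom.id_apply]
    · ring
    · module
  map_lie' {x y} := by
    ext
    · simp
    · simp [hΔ]; module

lemma mkAut_apply (x : AA F V T) :
    mkAut hα γ Δ hΔ x = (α * fst x) • e0 T + incl T (fst x • γ + Δ (snd x)) := rfl

@[simp] lemma mkAut_e0 : mkAut hα γ Δ hΔ (e0 T) = α • e0 T + incl T γ := by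
  ext <;> simp [mkAut_apply]

@[simp] lemma mkAut_incl (v : V) : mkAut hα γ Δ hΔ (incl T v) = incl T (Δ v) := by
  ext <;> simp [mkAut_apply]

end mkAut

lemma fst_apply_incl_apply (f : AA F V T →ₗ⁅F⁆ AA F V' T') (u : V) :
    fst (f (incl T (T u))) = 0 := by
  rw [← bracket_e0_incl, LieHom.map_lie, fst_lie]

lemma exists_eq_smulRight (hT : T ≠ 0) (φ : AA F V T ≃ₗ⁅F⁆ AA F V T) {v : V}
    (hv : fst (φ (incl T v)) ≠ 0) :
    ∃ (ℓ : Module.Dual F V) (e : V), ℓ e = 0 ∧ T = ℓ.smulRight e := by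
  set c := fst (φ (incl T v))
  let ℓ : Module.Dual F V := c⁻¹ • -(fst ∘ₗ (φ.symm : AA F V T →ₗ[F] AA F V T) ∘ₗ incl T)
  have hℓT (u : V) : ℓ (T u) = 0 := by
    show c⁻¹ * -fst (φ.symm (incl T (T u))) = 0
    exact mul_eq_zero_of_right _ (neg_eq_zero.2 (fst_apply_incl_apply φ.symm.toLieHom u))
  -- `ad (incl v)` has image in `F • incl (T v)`, hence so does its conjugate `ad (φ (incl v))`,
  -- which acts on `V` as `c • T`.
  have key (w : V) : incl T (T w) = ℓ w • φ (incl T (T v)) := by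
    have h := lie_incl (φ (incl T v)) w
    rw [← φ.apply_symm_apply (incl T w), ← LieEquiv.map_lie, incl_lie, map_neg, map_smul] at h
    show _ = (c⁻¹ * -fst (φ.symm (incl T w))) • _
    rw [mul_smul, neg_smul, h, inv_smul_smul₀ hv]
  obtain ⟨w₁, hw₁⟩ : ∃ w, T w ≠ 0 := by
    by_contra! h
    exact hT (LinearMap.ext h)
  have hℓw₁ : ℓ w₁ ≠ 0 := fun h => hw₁ (incl_injective (by rw [key, h, zero_smul, map_zero]))
  obtain ⟨e, he, hℓe⟩ : ∃ e, φ (incl T (T v)) = incl T e ∧ ℓ e = 0 :=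
    ⟨(ℓ w₁)⁻¹ • T w₁, by rw [map_smul, key w₁, smul_smul, inv_mul_cancel₀ hℓw₁, one_smul],
      by rw [map_smul, hℓT, smul_zero]⟩
  exact ⟨ℓ, e, hℓe, LinearMap.ext fun w =>
    incl_injective (by rw [key, he, LinearMap.smulRight_apply, map_smul])⟩

section RankOne

variable {ℓ : Module.Dual F V} {e : V}

lemma ne_zero_of_smulRight_ne_zero (h : ℓ.smulRight e ≠ 0) : e ≠ 0 := by
  rintro rfl
  exact h (by ext; simp)

lemma nonempty_lieEquiv_heisenberg (hℓe : ℓ e = 0) (hT : ℓ.smulRight e ≠ 0)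
    (hker : LinearMap.ker ℓ ≤ F ∙ e) : Nonempty (AA F V (ℓ.smulRight e) ≃ₗ⁅F⁆ Heisenberg F) := by
  have he := ne_zero_of_smulRight_ne_zero hT
  obtain ⟨w₀, hw₀⟩ : ∃ w, ℓ w = 1 := by
    obtain ⟨w, hw⟩ : ∃ w, ℓ w ≠ 0 := by
      by_contra! h
      exact hT (by ext w; simp [h w])
    exact ⟨(ℓ w)⁻¹ • w, by rw [map_smul, smul_eq_mul, inv_mul_cancel₀ hw]⟩
  let Θ : F × F →ₗ[F] V := (LinearMap.fst F F F).smulRight e + (LinearMap.snd F F F).smulRight w₀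
  have hΘ (p : F × F) : Θ p = p.1 • e + p.2 • w₀ := rfl
  have hℓΘ (p : F × F) : ℓ (Θ p) = p.2 := by simp [hΘ, hℓe, hw₀]
  have hinj : Function.Injective Θ := by
    rw [← LinearMap.ker_eq_bot, Submodule.eq_bot_iff]
    intro p hp
    have h₂ : p.2 = 0 := by rw [← hℓΘ, LinearMap.mem_ker.1 hp, map_zero]
    have h₁ : p.1 • e = 0 := by simpa [hΘ, h₂] using LinearMap.mem_ker.1 hp
    exact Prod.ext ((smul_eq_zero.1 h₁).resolve_right he) h₂
  have hsurj : Function.Surjective Θ := by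
    intro v
    obtain ⟨s, hs⟩ := Submodule.mem_span_singleton.1
      (hker (show v - ℓ v • w₀ ∈ LinearMap.ker ℓ by simp [hw₀]))
    exact ⟨(s, ℓ v), by rw [hΘ, hs, sub_add_cancel]⟩
  refine ⟨(congr (LinearEquiv.ofBijective Θ ⟨hinj, hsurj⟩) fun p => ?_).symm⟩
  show Θ (p.2, 0) = ℓ (Θ p) • e
  rw [hℓΘ, hΘ, zero_smul, add_zero]

lemma not_lieIndecomposable_of_not_ker_le (he : e ≠ 0) (hker : ¬LinearMap.ker ℓ ≤ F ∙ e) :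
    ¬LieIndecomposable F (AA F V (ℓ.smulRight e)) := by
  obtain ⟨u, hu, hue⟩ := Set.not_subset.1 hker
  refine not_lieIndecomposable_of_central ((F ∙ e).map (incl _)) (fun x y => ?_) ?_
    (z := incl _ u) ?_ ?_
  · obtain ⟨_, ⟨w, rfl⟩, h⟩ := lie_mem_map_incl_range x y
    exact ⟨_, Submodule.smul_mem _ _ (Submodule.mem_span_singleton_self e), h⟩
  · rw [ne_eq, ← Submodule.map_bot (incl _),
      (Submodule.map_injective_of_injective incl_injective).eq_iff, Submodule.span_singleton_eq_bot]
    exact he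
  · rintro ⟨w, hw, hwu⟩
    exact hue (incl_injective hwu ▸ hw)
  · intro x
    rw [lie_incl, LinearMap.smulRight_apply, LinearMap.mem_ker.1 hu, zero_smul, map_zero, smul_zero]

end RankOne

section Automorphisms

lemma fst_apply_incl_eq_zero (hT : T ≠ 0) (hind : LieIndecomposable F (AA F V T))
    (hheis : ¬Nonempty (AA F V T ≃ₗ⁅F⁆ Heisenberg F)) (φ : AA F V T ≃ₗ⁅F⁆ AA F V T) (v : V) :
    fst (φ (incl T v)) = 0 := by
  by_contra hv
  obtain ⟨ℓ, e, hℓe, rfl⟩ := exists_eq_smulRight hT φ hv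
  by_cases hker : LinearMap.ker ℓ ≤ F ∙ e
  · exact hheis (nonempty_lieEquiv_heisenberg hℓe hT hker)
  · exact not_lieIndecomposable_of_not_ker_le (ne_zero_of_smulRight_ne_zero hT) hker hind

lemma map_range_incl_le (f : AA F V T →ₗ[F] AA F V' T') (h : ∀ v, fst (f (incl T v)) = 0) :
    (LinearMap.range (incl T)).map f ≤ LinearMap.range (incl T') := by
  rintro _ ⟨_, ⟨v, rfl⟩, rfl⟩
  exact ⟨_, incl_snd_of_fst_eq_zero (h v)⟩

lemma map_range_incl_eq (hT : T ≠ 0) (hind : LieIndecomposable F (AA F V T))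
    (hheis : ¬Nonempty (AA F V T ≃ₗ⁅F⁆ Heisenberg F)) (φ : AA F V T ≃ₗ⁅F⁆ AA F V T) :
    (LinearMap.range (incl T)).map (φ : AA F V T →ₗ[F] AA F V T) = LinearMap.range (incl T) := by
  refine le_antisymm (map_range_incl_le _ (fst_apply_incl_eq_zero hT hind hheis φ)) ?_
  rintro _ ⟨v, rfl⟩
  exact ⟨φ.symm (incl T v),
    ⟨_, incl_snd_of_fst_eq_zero (fst_apply_incl_eq_zero hT hind hheis φ.symm v)⟩,
    φ.apply_symm_apply _⟩

lemma exists_linearEquiv_apply_incl (φ : AA F V T ≃ₗ⁅F⁆ AA F V' T')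
    (h : (LinearMap.range (incl T)).map (φ : AA F V T →ₗ[F] AA F V' T') =
      LinearMap.range (incl T')) :
    ∃ Δ : V ≃ₗ[F] V', ∀ v, φ (incl T v) = incl T' (Δ v) :=
  ⟨(LinearEquiv.ofInjective _ incl_injective).trans ((φ.toLinearEquiv.ofSubmodules _ _ h).trans
    (LinearEquiv.ofInjective _ incl_injective).symm), fun v => by simp⟩

lemma fst_apply_e0_ne_zero (φ : AA F V T ≃ₗ⁅F⁆ AA F V' T') {Δ : V → V'}
    (hΔ : ∀ v, φ (incl T v) = incl T' (Δ v)) : fst (φ (e0 T)) ≠ 0 := by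
  intro h
  obtain ⟨x, hx⟩ := φ.surjective (e0 T')
  rw [← fst_smul_e0_add_incl_snd x] at hx
  simpa [h, hΔ] using congrArg fst hx

lemma apply_T_eq_smul (f : AA F V T →ₗ⁅F⁆ AA F V' T') {Δ : V → V'}
    (hΔ : ∀ v, f (incl T v) = incl T' (Δ v)) (v : V) : Δ (T v) = fst (f (e0 T)) • T' (Δ v) :=
  incl_injective (by rw [← hΔ, ← bracket_e0_incl, LieHom.map_lie, hΔ, lie_incl, map_smul])

end Automorphisms

end AA

/-- For an indecomposable almost Abelian Lie algebra `L = F e₀ ⋉ V` not isomorphic to the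
Heisenberg algebra: every automorphism preserves `V` and is of the form
`e₀ ↦ α e₀ + γ`, `v ↦ Δ v` with `α ∈ F*`, `γ ∈ V`, `Δ ∈ GL(V)`, `Δ ∘ ad_{e₀} = α • ad_{e₀} ∘ Δ`;
and conversely every such map is an automorphism. -/
theorem stmt13 (F V : Type*) [Field F] [AddCommGroup V] [Module F V]
    (T : Module.End F V) (hT : T ≠ 0) (hind : LieIndecomposable F (AA F V T))
    (hheis : ¬Nonempty (AA F V T ≃ₗ⁅F⁆ Heisenberg F)) :
    (∀ φ : AA F V T ≃ₗ⁅F⁆ AA F V T,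
      Submodule.map φ.toLieHom.toLinearMap (LinearMap.range (AA.incl T))
          = LinearMap.range (AA.incl T) ∧
      ∃ (α : F) (γ : V) (Δ : V ≃ₗ[F] V), α ≠ 0 ∧
        φ (AA.e0 T) = α • AA.e0 T + AA.incl T γ ∧
        (∀ v : V, φ (AA.incl T v) = AA.incl T (Δ v)) ∧
        ∀ v : V, Δ (T v) = α • T (Δ v)) ∧
    (∀ (α : F) (γ : V) (Δ : V ≃ₗ[F] V), α ≠ 0 → (∀ v : V, Δ (T v) = α • T (Δ v)) →
      ∃ φ : AA F V T ≃ₗ⁅F⁆ AA F V T,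
        φ (AA.e0 T) = α • AA.e0 T + AA.incl T γ ∧
        ∀ v : V, φ (AA.incl T v) = AA.incl T (Δ v)) := by
  refine ⟨fun φ => ?_, fun α γ Δ hα hΔ =>
    ⟨AA.mkAut hα γ Δ hΔ, AA.mkAut_e0 hα γ Δ hΔ, AA.mkAut_incl hα γ Δ hΔ⟩⟩
  have hmap := AA.map_range_incl_eq hT hind hheis φ
  obtain ⟨Δ, hΔ⟩ := AA.exists_linearEquiv_apply_incl φ hmap
  exact ⟨hmap, AA.fst (φ (AA.e0 T)), AA.snd (φ (AA.e0 T)), Δ, AA.fst_apply_e0_ne_zero φ hΔ,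
    (AA.fst_smul_e0_add_incl_snd _).symm, hΔ, AA.apply_T_eq_smul φ.toLieHom hΔ⟩
end
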